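/- Let c ∈ ℝ with c > 0 and let τ > 0. Let S(τ) be the 2×2 real matrix with rows (1 + τ²c/2, τc(1 + τ²c/4)) and (τ, 1 + τ²c/2). Then trace S(τ) > 2, det S(τ) = 1, and the set {x ∈ ℝ² : {S(τ)ⁿ·x : n ∈ ℕ} is bounded} is a linear subspace of ℝ² of dimension 1, the same as the dimension of {x ∈ ℝ² : {exp(tA)·x : t ≥ 0} is bounded} for the matrix A with rows (0, c) and (1, 0). -/

import Mathlib

/-!
Both `S(τ)` and `A` have the shape `!![d, p * r ^ 2; p, d]`, whose eigenvectors `(r, 1)` and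
`(-r, 1)` have eigenvalues `d + p r` and `d - p r`. For `S(τ)` take `r = √(c (1 + τ²c/4))`: the
eigenvalues are `λ = 1 + τ²c/2 + τ r > 1` and `1/λ`. For `A` take `r = √c`, so that `exp (t A)`
has eigenvalues `e^{± t √c}`. Writing `x = a (r, 1) + b (-r, 1)`, the orbit of `x` is
`a λᵢ (r, 1) + b μᵢ (-r, 1)` with `λᵢ` unbounded and `μᵢ` bounded, so it is bounded iff `a = 0`:
the bounded orbits fill exactly the stable line spanned by `(-r, 1)`.
-/

open Matrix Bornology

/-- The positive semi-orbit of `x` under the continuous dynamical system `y' = A y`,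
i.e. the set `{exp (t A) x : t ≥ 0}`. -/
noncomputable def contOrbit (A : Matrix (Fin 2) (Fin 2) ℝ) (x : EuclideanSpace ℝ (Fin 2)) :
    Set (EuclideanSpace ℝ (Fin 2)) :=
  {y | ∃ t : ℝ, 0 ≤ t ∧ y = (NormedSpace.exp (t • A)).mulVec x}

/-- The positive semi-orbit of `x` under the discrete dynamical system `y_{n+1} = S y_n`,
i.e. the set `{Sⁿ x : n ∈ ℕ}`. -/
def discOrbit (S : Matrix (Fin 2) (Fin 2) ℝ) (x : EuclideanSpace ℝ (Fin 2)) :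
    Set (EuclideanSpace ℝ (Fin 2)) :=
  {y | ∃ n : ℕ, y = (S ^ n).mulVec x}

open Set Submodule

section Eigenvector

variable {n : Type*} [Fintype n] [DecidableEq n]

theorem Matrix.pow_mulVec_of_mulVec_eq_smul {R : Type*} [CommSemiring R] {M : Matrix n n R}
    {u : n → R} {μ : R} (h : M *ᵥ u = μ • u) (k : ℕ) : (M ^ k) *ᵥ u = μ ^ k • u := by
  induction k with
  | zero => simp
  | succ k ih => rw [pow_succ, ← mulVec_mulVec, h, mulVec_smul, ih, smul_smul, pow_succ']

-- Any matrix norm serves here: it is only needed to sum the exponential series.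
attribute [local instance] Matrix.linftyOpNormedAddCommGroup Matrix.linftyOpNormedRing
  Matrix.linftyOpNormedAlgebra in
theorem Matrix.exp_mulVec_of_mulVec_eq_smul {𝕂 : Type*} [RCLike 𝕂] {M : Matrix n n 𝕂}
    {u : n → 𝕂} {μ : 𝕂} (h : M *ᵥ u = μ • u) :
    NormedSpace.exp M *ᵥ u = NormedSpace.exp μ • u := by
  have hM := (NormedSpace.exp_series_hasSum_exp' (𝕂 := 𝕂) M).map
    (mulVec.addMonoidHomLeft u) (continuous_id.matrix_mulVec continuous_const)
  have hμ := (NormedSpace.exp_series_hasSum_exp' (𝕂 := 𝕂) μ).smul_const u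
  refine hM.unique ?_
  convert hμ using 2 with k
  simp [mulVec.addMonoidHomLeft, smul_mulVec, pow_mulVec_of_mulVec_eq_smul h, smul_smul]

end Eigenvector

section Boundedness

variable {𝕜 E ι : Type*} [NormedField 𝕜] [NormedAddCommGroup E] [NormedSpace 𝕜 E]

theorem isBounded_range_smul_const {c : ι → 𝕜} (hc : IsBounded (range c)) (v : E) :
    IsBounded (range fun i => c i • v) := by
  simp only [isBounded_iff_forall_norm_le, forall_mem_range, norm_smul] at hc ⊢
  obtain ⟨C, hC⟩ := hc
  exact ⟨C * ‖v‖, fun i => mul_le_mul_of_nonneg_right (hC i) (norm_nonneg v)⟩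

theorem Bornology.IsBounded.of_range_smul_const {c : ι → 𝕜} {v : E} (hv : v ≠ 0)
    (h : IsBounded (range fun i => c i • v)) : IsBounded (range c) := by
  simp only [isBounded_iff_forall_norm_le, forall_mem_range, norm_smul] at h ⊢
  obtain ⟨C, hC⟩ := h
  exact ⟨C / ‖v‖, fun i => (le_div_iff₀ (norm_pos_iff.2 hv)).2 (hC i)⟩

theorem isBounded_range_sub {g h : ι → E} (hg : IsBounded (range g)) (hh : IsBounded (range h)) :
    IsBounded (range (g - h)) :=
  (isBounded_sub hg hh).subset <| range_subset_iff.2 fun i =>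
    sub_mem_sub (mem_range_self i) (mem_range_self i)

theorem isBounded_range_apply_iff_mem_span_singleton {f : ι → E →ₗ[𝕜] E} {v w : E}
    {l m : ι → 𝕜} (hspan : span 𝕜 {v, w} = ⊤) (hv : v ≠ 0)
    (hfv : ∀ i, f i v = l i • v) (hfw : ∀ i, f i w = m i • w)
    (hl : ¬IsBounded (range l)) (hm : IsBounded (range m)) (x : E) :
    IsBounded (range fun i => f i x) ↔ x ∈ span 𝕜 {w} := by
  have orbit_w (b : 𝕜) : IsBounded (range fun i => f i (b • w)) := by
    simp_rw [map_smul, hfw, smul_comm _ (m _)]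
    exact isBounded_range_smul_const hm (b • w)
  constructor
  · intro hx
    obtain ⟨a, b, rfl⟩ := mem_span_pair.1 (hspan ▸ mem_top : x ∈ span 𝕜 {v, w})
    have hv_orbit : IsBounded (range fun i => l i • a • v) := by
      convert isBounded_range_sub hx (orbit_w b) using 3 with i
      simp [hfv, smul_comm a (l i)]
    obtain rfl : a = 0 := by
      by_contra ha
      exact hl (hv_orbit.of_range_smul_const (smul_ne_zero ha hv))
    simpa using mem_span_singleton_self (R := 𝕜) w |> smul_mem _ b
  · intro hx
    obtain ⟨b, rfl⟩ := mem_span_singleton.1 hx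
    exact orbit_w b

end Boundedness

theorem not_isBounded_range_pow {𝕜 : Type*} [NormedField 𝕜] {a : 𝕜} (ha : 1 < ‖a‖) :
    ¬IsBounded (range fun n : ℕ => a ^ n) := by
  simp only [isBounded_iff_forall_norm_le, forall_mem_range, norm_pow, not_exists, not_forall,
    not_le]
  exact fun C => pow_unbounded_of_one_lt C ha

theorem isBounded_range_pow {𝕜 : Type*} [NormedField 𝕜] {a : 𝕜} (ha : ‖a‖ ≤ 1) :
    IsBounded (range fun n : ℕ => a ^ n) :=
  isBounded_iff_forall_norm_le.2
    ⟨1, forall_mem_range.2 fun n => norm_pow a n ▸ pow_le_one₀ (norm_nonneg a) ha⟩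

theorem not_isBounded_range_exp_mul {a : ℝ} (ha : 0 < a) :
    ¬IsBounded (range fun t : NNReal => Real.exp (t * a)) := by
  simp only [isBounded_iff_forall_norm_le, forall_mem_range, Real.norm_eq_abs, Real.abs_exp,
    not_exists, not_forall, not_le]
  intro C
  refine ⟨⟨max C 0 / a, by positivity⟩, ?_⟩
  change C < Real.exp (max C 0 / a * a)
  rw [div_mul_cancel₀ _ ha.ne']
  linarith [le_max_left C 0, Real.add_one_le_exp (max C 0)]

theorem isBounded_range_exp_mul {a : ℝ} (ha : a ≤ 0) :
    IsBounded (range fun t : NNReal => Real.exp (t * a)) :=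
  isBounded_iff_forall_norm_le.2 ⟨1, forall_mem_range.2 fun t => by
    rw [Real.norm_eq_abs, Real.abs_exp, Real.exp_le_one_iff]
    exact mul_nonpos_of_nonneg_of_nonpos t.2 ha⟩

theorem discOrbit_eq_range (S : Matrix (Fin 2) (Fin 2) ℝ) (x : EuclideanSpace ℝ (Fin 2)) :
    discOrbit S x = range fun n : ℕ => toLpLin 2 2 (S ^ n) x := by
  ext y
  simp only [discOrbit, mem_ofPred_eq, mem_range, toLpLin_apply, WithLp.ext_iff, eq_comm]

theorem contOrbit_eq_range (A : Matrix (Fin 2) (Fin 2) ℝ) (x : EuclideanSpace ℝ (Fin 2)) :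
    contOrbit A x = range fun t : NNReal => toLpLin 2 2 (NormedSpace.exp ((t : ℝ) • A)) x := by
  ext y
  simp only [contOrbit, mem_ofPred_eq, mem_range, toLpLin_apply, WithLp.ext_iff, eq_comm,
    NNReal.exists, NNReal.coe_mk, exists_prop]

theorem mulVec_eigenvector {R : Type*} [CommRing R] (d p r : R) :
    !![d, p * r ^ 2; p, d] *ᵥ ![r, 1] = (d + p * r) • ![r, 1] := by
  ext i
  fin_cases i <;> simp [mulVec, dotProduct] <;> ring

theorem span_pair_eq_top {r : ℝ} (hr : r ≠ 0) :
    span ℝ {WithLp.toLp 2 ![r, 1], WithLp.toLp 2 ![-r, 1]} =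
      (⊤ : Submodule ℝ (EuclideanSpace ℝ (Fin 2))) := by
  refine eq_top_iff'.2 fun x => mem_span_pair.2 ⟨(x 0 / r + x 1) / 2, (x 1 - x 0 / r) / 2, ?_⟩
  ext i
  fin_cases i <;> simp <;> field_simp <;> ring

theorem exists_finrank_eq_one_setOf_isBounded_range {ι : Type*}
    (F : ι → Matrix (Fin 2) (Fin 2) ℝ) {r : ℝ} (hr : r ≠ 0) {l m : ι → ℝ}
    (hv : ∀ i, F i *ᵥ ![r, 1] = l i • ![r, 1]) (hw : ∀ i, F i *ᵥ ![-r, 1] = m i • ![-r, 1])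
    (hl : ¬IsBounded (range l)) (hm : IsBounded (range m)) :
    ∃ B : Submodule ℝ (EuclideanSpace ℝ (Fin 2)),
      (B : Set (EuclideanSpace ℝ (Fin 2))) =
        {x | IsBounded (range fun i => toLpLin 2 2 (F i) x)} ∧ Module.finrank ℝ B = 1 := by
  have hv_ne : (WithLp.toLp 2 ![r, 1] : EuclideanSpace ℝ (Fin 2)) ≠ 0 := by
    simp [WithLp.ext_iff]
  have hw_ne : (WithLp.toLp 2 ![-r, 1] : EuclideanSpace ℝ (Fin 2)) ≠ 0 := by
    simp [WithLp.ext_iff]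
  refine ⟨span ℝ {WithLp.toLp 2 ![-r, 1]}, ?_, finrank_span_singleton hw_ne⟩
  ext x
  refine (isBounded_range_apply_iff_mem_span_singleton (span_pair_eq_top hr) hv_ne
    (fun i => ?_) (fun i => ?_) hl hm x).symm
  · rw [toLpLin_apply, WithLp.ofLp_toLp, hv i, WithLp.toLp_smul]
  · rw [toLpLin_apply, WithLp.ofLp_toLp, hw i, WithLp.toLp_smul]

section Saddle

variable {d p r : ℝ}

theorem mulVec_eigenvector_neg :
    !![d, p * r ^ 2; p, d] *ᵥ ![-r, 1] = (d - p * r) • ![-r, 1] := by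
  simpa only [neg_sq, mul_neg, ← sub_eq_add_neg] using mulVec_eigenvector d p (-r)

theorem exists_finrank_eq_one_setOf_isBounded_discOrbit (hr : r ≠ 0) (hl : 1 < |d + p * r|)
    (hm : |d - p * r| ≤ 1) :
    ∃ B : Submodule ℝ (EuclideanSpace ℝ (Fin 2)),
      (B : Set (EuclideanSpace ℝ (Fin 2))) =
        {x | IsBounded (discOrbit !![d, p * r ^ 2; p, d] x)} ∧ Module.finrank ℝ B = 1 := by
  simp_rw [discOrbit_eq_range]
  exact exists_finrank_eq_one_setOf_isBounded_range _ hr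
    (pow_mulVec_of_mulVec_eq_smul (mulVec_eigenvector d p r))
    (pow_mulVec_of_mulVec_eq_smul mulVec_eigenvector_neg)
    (not_isBounded_range_pow hl) (isBounded_range_pow hm)

theorem exists_finrank_eq_one_setOf_isBounded_contOrbit (hr : r ≠ 0) (hl : 0 < d + p * r)
    (hm : d - p * r ≤ 0) :
    ∃ B : Submodule ℝ (EuclideanSpace ℝ (Fin 2)),
      (B : Set (EuclideanSpace ℝ (Fin 2))) =
        {x | IsBounded (contOrbit !![d, p * r ^ 2; p, d] x)} ∧ Module.finrank ℝ B = 1 := by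
  have exp_mulVec {u : Fin 2 → ℝ} {μ : ℝ} (h : !![d, p * r ^ 2; p, d] *ᵥ u = μ • u)
      (t : NNReal) :
      NormedSpace.exp ((t : ℝ) • !![d, p * r ^ 2; p, d]) *ᵥ u = Real.exp (t * μ) • u := by
    rw [Real.exp_eq_exp_ℝ]
    exact exp_mulVec_of_mulVec_eq_smul (by rw [smul_mulVec, h, smul_smul])
  simp_rw [contOrbit_eq_range]
  exact exists_finrank_eq_one_setOf_isBounded_range _ hr
    (exp_mulVec (mulVec_eigenvector d p r)) (exp_mulVec mulVec_eigenvector_neg)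
    (not_isBounded_range_exp_mul hl) (isBounded_range_exp_mul hm)

end Saddle

theorem stmt_17 (c τ : ℝ) (hc : 0 < c) (hτ : 0 < τ) :
    (2 : ℝ) < (!![1 + τ ^ 2 * c / 2, τ * c * (1 + τ ^ 2 * c / 4); τ, 1 + τ ^ 2 * c / 2] :
        Matrix (Fin 2) (Fin 2) ℝ).trace ∧
    (!![1 + τ ^ 2 * c / 2, τ * c * (1 + τ ^ 2 * c / 4); τ, 1 + τ ^ 2 * c / 2] :
        Matrix (Fin 2) (Fin 2) ℝ).det = 1 ∧
    ∃ BS BA : Submodule ℝ (EuclideanSpace ℝ (Fin 2)),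
      (↑BS = {x : EuclideanSpace ℝ (Fin 2) |
        IsBounded (discOrbit
          !![1 + τ ^ 2 * c / 2, τ * c * (1 + τ ^ 2 * c / 4); τ, 1 + τ ^ 2 * c / 2] x)}) ∧
      Module.finrank ℝ BS = 1 ∧
      (↑BA = {x : EuclideanSpace ℝ (Fin 2) | IsBounded (contOrbit !![0, c; 1, 0] x)}) ∧
      Module.finrank ℝ BA = 1 := by
  have hq : 0 < c * (1 + τ ^ 2 * c / 4) := by positivity
  set r := √(c * (1 + τ ^ 2 * c / 4))
  have hr : 0 < r := Real.sqrt_pos.2 hq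
  have hr_sq : r ^ 2 = c * (1 + τ ^ 2 * c / 4) := Real.sq_sqrt hq.le
  have hlam : 1 < 1 + τ ^ 2 * c / 2 + τ * r := by
    linarith [mul_pos hτ hr, show 0 < τ ^ 2 * c by positivity]
  have hlam_mu : (1 + τ ^ 2 * c / 2 + τ * r) * (1 + τ ^ 2 * c / 2 - τ * r) = 1 := by
    linear_combination (-τ ^ 2) * hr_sq
  have hmu : |1 + τ ^ 2 * c / 2 - τ * r| ≤ 1 := abs_le.2 ⟨by nlinarith, by nlinarith⟩
  obtain ⟨BS, hBS, hBS_rank⟩ := exists_finrank_eq_one_setOf_isBounded_discOrbit hr.ne'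
    (hlam.trans_le (le_abs_self _)) hmu
  obtain ⟨BA, hBA, hBA_rank⟩ := exists_finrank_eq_one_setOf_isBounded_contOrbit (d := 0) (p := 1)
    (Real.sqrt_pos.2 hc).ne' (by simpa using Real.sqrt_pos.2 hc) (by simp)
  rw [show τ * r ^ 2 = τ * c * (1 + τ ^ 2 * c / 4) by rw [hr_sq]; ring] at hBS
  rw [one_mul, Real.sq_sqrt hc.le] at hBA
  refine ⟨?_, ?_, BS, BA, hBS, hBS_rank, hBA, hBA_rank⟩
  · rw [trace_fin_two_of]
    linarith [show 0 < τ ^ 2 * c by positivity]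
  · rw [det_fin_two_of]
    ring
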